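/- Let c be a phase matrix and T a state matrix, and let g ∈ L¹([0,2π)) be a function such that (2π)⁻¹ ∫_X g(θ) dθ = lim_{s,t→∞} Σ_{n=0}^{s} Σ_{m=0}^{t} T(m,n)·c(n,m)·i_{n−m}(X) for every Borel set X ⊆ [0,2π). Then there exists a strictly increasing sequence (s_k)_{k∈ℕ} of natural numbers such that for Lebesgue-almost every θ ∈ [0,2π): g(θ) = lim_{k→∞} Σ_{n=0}^{s_k} Σ_{m=0}^{s_k} T(m,n)·c(n,m)·e^{i(n−m)θ}. -/

import Mathlib

open scoped ComplexConjugate ComplexOrder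
open MeasureTheory Filter
open scoped Matrix

noncomputable section

def IsPosSemidef (c : ℕ × ℕ → ℂ) : Prop :=
  ∀ f : ℕ →₀ ℂ, 0 ≤ ∑ n ∈ f.support, ∑ m ∈ f.support, conj (f n) * c (n, m) * f m

def IsPhaseMatrix (c : ℕ × ℕ → ℂ) : Prop :=
  (∀ n, c (n, n) = 1) ∧ IsPosSemidef c

def IsStateMatrix (T : ℕ × ℕ → ℂ) : Prop :=
  IsPosSemidef T ∧ HasSum (fun n => T (n, n)) 1

/-- `i_k(X) = (2π)⁻¹ ∫_X e^{ikθ} dθ`. -/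
def ik (k : ℤ) (X : Set ℝ) : ℂ :=
  (2 * Real.pi)⁻¹ * ∫ θ in X, Complex.exp (Complex.I * k * θ)

/-- The normalized Lebesgue measure `(2π)⁻¹ dθ` on `[0, 2π)`. -/
def mu : Measure ℝ :=
  (ENNReal.ofReal (2 * Real.pi)⁻¹) • (volume.restrict (Set.Ico 0 (2 * Real.pi)))

/-- The partial sum `Σ_{n=0}^{s} Σ_{m=0}^{t} T(m,n)·c(n,m)·e^{i(n−m)θ}`. -/
def hpart (c T : ℕ × ℕ → ℂ) (s t : ℕ) (θ : ℝ) : ℂ :=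
  ∑ n ∈ Finset.range (s + 1), ∑ m ∈ Finset.range (t + 1),
    T (m, n) * c (n, m) * Complex.exp (Complex.I * (((n : ℤ) - m : ℤ) : ℂ) * θ)

lemma form_nonneg {M : ℕ × ℕ → ℂ} (h : IsPosSemidef M) (F : Finset ℕ) (v : ℕ → ℂ) :
    0 ≤ ∑ n ∈ F, ∑ m ∈ F, conj (v n) * M (n, m) * v m := by
  classical
  set f : ℕ →₀ ℂ := Finsupp.onFinset F (fun n => if n ∈ F then v n else 0)
    (fun n hn => by by_contra h'; simp [h'] at hn) with hf
  have hsub : f.support ⊆ F := Finsupp.support_onFinset_subset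
  have hval : ∀ n ∈ F, f n = v n := fun n hn => by simp [hf, Finsupp.onFinset_apply, hn]
  have h0 := h f
  have e1 : ∑ n ∈ f.support, ∑ m ∈ f.support, conj (f n) * M (n, m) * f m
      = ∑ n ∈ F, ∑ m ∈ F, conj (v n) * M (n, m) * v m := by
    rw [Finset.sum_subset hsub (fun n _ hn => ?_)]
    · refine Finset.sum_congr rfl fun n hn => ?_
      rw [Finset.sum_subset hsub (fun m _ hm => ?_)]
      · exact Finset.sum_congr rfl fun m hm => by rw [hval n hn, hval m hm]
      · rw [Finsupp.notMem_support_iff.mp hm, mul_zero]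
    · have : f n = 0 := Finsupp.notMem_support_iff.mp hn
      simp [this]
  rwa [e1] at h0

lemma diag_nonneg {M : ℕ × ℕ → ℂ} (h : IsPosSemidef M) (n : ℕ) : 0 ≤ M (n, n) := by
  have := form_nonneg h {n} (fun _ => 1)
  simpa using this

lemma herm {M : ℕ × ℕ → ℂ} (h : IsPosSemidef M) (n m : ℕ) : M (m, n) = conj (M (n, m)) := by
  classical
  have hdiag : ∀ k, (M (k, k)).im = 0 := fun k => ((Complex.nonneg_iff.mp (diag_nonneg h k)).2).symm
  rcases eq_or_ne n m with rfl | hnm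
  · exact (Complex.ext (by simp) (by simp [hdiag n])).symm
  · have hmn : m ≠ n := hnm.symm
    have E1 := form_nonneg h {n, m} (fun _ => 1)
    rw [Finset.sum_pair hnm] at E1
    rw [Finset.sum_pair hnm, Finset.sum_pair hnm] at E1
    simp only [map_one, one_mul, mul_one] at E1
    have E1im := (Complex.nonneg_iff.mp E1).2
    have E2 := form_nonneg h {n, m} (fun x => if x = m then Complex.I else 1)
    rw [Finset.sum_pair hnm] at E2
    rw [Finset.sum_pair hnm, Finset.sum_pair hnm] at E2
    simp only [if_pos rfl, if_neg hnm, if_true, map_one, one_mul, mul_one, Complex.conj_I] at E2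
    have E2im := (Complex.nonneg_iff.mp E2).2
    simp only [Complex.add_im, Complex.mul_im, Complex.mul_re, Complex.I_re, Complex.I_im,
      Complex.neg_im, Complex.neg_re, hdiag] at E1im E2im
    apply Complex.ext
    · simp only [Complex.conj_re]; nlinarith [E2im]
    · simp only [Complex.conj_im]; nlinarith [E1im]

lemma dot_expand {ι : Type*} [Fintype ι] (M : Matrix ι ι ℂ) (x : ι → ℂ) :
    dotProduct (star x) (M *ᵥ x) = ∑ i, ∑ j, conj (x i) * M i j * x j := by
  simp only [dotProduct, Matrix.mulVec, Pi.star_apply, RCLike.star_def, Finset.mul_sum]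
  exact Finset.sum_congr rfl fun i _ => Finset.sum_congr rfl fun j _ => by ring

lemma had_entry {ι : Type*} [Fintype ι] (P Q : Matrix ι ι ℂ) (R : Matrix (ι × ι) ι ℂ)
    (hR : ∀ (kl : ι × ι) (r : ι), R kl r = P kl.1 r * Q kl.2 r) (i j : ι) :
    (Pᴴ * P) i j * ((Qᴴ * Q) i j) = (Rᴴ * R) i j := by
  simp only [Matrix.mul_apply, Matrix.conjTranspose_apply]
  rw [Finset.sum_mul_sum, ← Finset.univ_product_univ, Finset.sum_product]
  refine Finset.sum_congr rfl fun k _ => Finset.sum_congr rfl fun l _ => ?_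
  rw [hR (k, l) i, hR (k, l) j]
  simp only [star_mul']
  ring

lemma form_coe (F : Finset ℕ) (phi : ℕ → ℕ → ℂ) (x : ↥F → ℂ) :
    ∑ n ∈ F, ∑ m ∈ F, conj ((fun n => if h : n ∈ F then x ⟨n, h⟩ else 0) n) * phi n m *
        ((fun n => if h : n ∈ F then x ⟨n, h⟩ else 0) m)
      = ∑ i : ↥F, ∑ j : ↥F, conj (x i) * phi i j * x j := by
  rw [← Finset.sum_coe_sort F]
  refine Finset.sum_congr rfl fun i _ => ?_
  rw [← Finset.sum_coe_sort F]
  refine Finset.sum_congr rfl fun j _ => ?_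
  simp

lemma had_nonneg {c T : ℕ × ℕ → ℂ} (hT : IsPosSemidef T) (hc : IsPosSemidef c)
    (F : Finset ℕ) (v : ℕ → ℂ) :
    0 ≤ ∑ n ∈ F, ∑ m ∈ F, conj (v n) * (T (m, n) * c (n, m)) * v m := by
  classical
  have psd_of_form : ∀ (M : Matrix ↥F ↥F ℂ), (∀ i j : ↥F, M j i = conj (M i j)) →
      (∀ x : ↥F → ℂ, 0 ≤ ∑ i, ∑ j, conj (x i) * M i j * x j) → M.PosSemidef := by
    intro M hh hq
    refine Matrix.PosSemidef.of_dotProduct_mulVec_nonneg (Matrix.ext fun i j => ?_) fun x => ?_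
    · rw [Matrix.conjTranspose_apply, hh i j, starRingEnd_apply, star_star]
    · rw [dot_expand]; exact hq x
  have hSm_psd : Matrix.PosSemidef (fun i j => T (j.1, i.1) : Matrix ↥F ↥F ℂ) := by
    refine psd_of_form _ (fun i j => herm hT _ _) (fun x => ?_)
    have h0 := form_nonneg hT F (fun n => if h : n ∈ F then conj (x ⟨n, h⟩) else 0)
    rw [form_coe F (fun n m => T (n, m)) (fun i => conj (x i))] at h0
    calc (0:ℂ) ≤ ∑ i : ↥F, ∑ j : ↥F, conj (conj (x i)) * T (↑i, ↑j) * conj (x j) := h0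
    _ = ∑ j : ↥F, ∑ i : ↥F, conj (conj (x i)) * T (↑i, ↑j) * conj (x j) := Finset.sum_comm
    _ = ∑ i : ↥F, ∑ j : ↥F, conj (x i) * T (↑j, ↑i) * x j := by
        refine Finset.sum_congr rfl fun i _ => Finset.sum_congr rfl fun j _ => ?_
        rw [Complex.conj_conj]
        ring
  have hCm_psd : Matrix.PosSemidef (fun i j => c (i.1, j.1) : Matrix ↥F ↥F ℂ) := by
    refine psd_of_form _ (fun i j => herm hc _ _) (fun x => ?_)
    have h0 := form_nonneg hc F (fun n => if h : n ∈ F then x ⟨n, h⟩ else 0)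
    rwa [form_coe F (fun n m => c (n, m)) x] at h0
  obtain ⟨P, hP⟩ : ∃ P : Matrix ↥F ↥F ℂ, (fun i j => T (j.1, i.1) : Matrix ↥F ↥F ℂ) = Pᴴ * P := by
    open scoped MatrixOrder in exact CStarAlgebra.nonneg_iff_eq_star_mul_self.mp hSm_psd.nonneg
  obtain ⟨Q, hQ⟩ : ∃ Q : Matrix ↥F ↥F ℂ, (fun i j => c (i.1, j.1) : Matrix ↥F ↥F ℂ) = Qᴴ * Q := by
    open scoped MatrixOrder in exact CStarAlgebra.nonneg_iff_eq_star_mul_self.mp hCm_psd.nonneg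
  have hPij : ∀ (i j : ↥F), T (↑j, ↑i) = (Pᴴ * P) i j := fun i j => by
    have := congrFun (congrFun hP i) j; simpa using this
  have hQij : ∀ (i j : ↥F), c (↑i, ↑j) = (Qᴴ * Q) i j := fun i j => by
    have := congrFun (congrFun hQ i) j; simpa using this
  have key : ∑ n ∈ F, ∑ m ∈ F, conj (v n) * (T (m, n) * c (n, m)) * v m
      = ∑ i : ↥F, ∑ j : ↥F, conj (v i.1) * ((Pᴴ * P) i j * ((Qᴴ * Q) i j)) * v j.1 := by
    calc ∑ n ∈ F, ∑ m ∈ F, conj (v n) * (T (m, n) * c (n, m)) * v m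
        = ∑ n ∈ F, ∑ m ∈ F,
            conj ((fun n => if h : n ∈ F then (fun i : ↥F => v i.1) ⟨n, h⟩ else 0) n)
              * (T (m, n) * c (n, m))
              * ((fun n => if h : n ∈ F then (fun i : ↥F => v i.1) ⟨n, h⟩ else 0) m) := by
          exact Finset.sum_congr rfl fun n hn => Finset.sum_congr rfl fun m hm => by
            simp [hn, hm]
      _ = ∑ i : ↥F, ∑ j : ↥F, conj (v i.1) * (T (j.1, i.1) * c (i.1, j.1)) * v j.1 :=
          form_coe F (fun n m => T (m, n) * c (n, m)) (fun i : ↥F => v i.1)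
      _ = ∑ i : ↥F, ∑ j : ↥F, conj (v i.1) * ((Pᴴ * P) i j * ((Qᴴ * Q) i j)) * v j.1 := by
          exact Finset.sum_congr rfl fun i _ => Finset.sum_congr rfl fun j _ => by
            rw [hPij i j, hQij i j]
  rw [key]
  have h1 := (Matrix.posSemidef_conjTranspose_mul_self
      (fun kl r => P kl.1 r * Q kl.2 r : Matrix (↥F × ↥F) ↥F ℂ)).dotProduct_mulVec_nonneg (fun i : ↥F => v i.1)
  rw [dot_expand] at h1
  calc (0:ℂ) ≤ _ := h1
    _ = ∑ i : ↥F, ∑ j : ↥F, conj (v i.1) * ((Pᴴ * P) i j * ((Qᴴ * Q) i j)) * v j.1 := by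
      refine Finset.sum_congr rfl fun i _ => Finset.sum_congr rfl fun j _ => ?_
      rw [had_entry P Q _ (fun kl r => rfl) i j]

lemma cs_key {A : ℕ → ℕ → ℂ}
    (hpsd : ∀ (F : Finset ℕ) (v : ℕ → ℂ), 0 ≤ ∑ n ∈ F, ∑ m ∈ F, conj (v n) * A n m * v m)
    (hherm : ∀ n m, A m n = conj (A n m))
    (F G : Finset ℕ) (hFG : Disjoint F G) (v : ℕ → ℂ) :
    ‖∑ n ∈ F, ∑ m ∈ G, conj (v n) * A n m * v m‖ ^ 2
      ≤ (∑ n ∈ F, ∑ m ∈ F, conj (v n) * A n m * v m).re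
        * (∑ n ∈ G, ∑ m ∈ G, conj (v n) * A n m * v m).re := by
  classical
  set z := ∑ n ∈ F, ∑ m ∈ G, conj (v n) * A n m * v m with hz
  set SF := ∑ n ∈ F, ∑ m ∈ F, conj (v n) * A n m * v m with hSF
  set SG := ∑ n ∈ G, ∑ m ∈ G, conj (v n) * A n m * v m with hSG
  have hSFnn := hpsd F v
  have hSGnn := hpsd G v
  rw [← hSF] at hSFnn
  rw [← hSG] at hSGnn
  obtain ⟨p, hp0, hpz⟩ : ∃ p : ℝ, 0 ≤ p ∧ SF = (p : ℂ) :=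
    ⟨SF.re, (Complex.nonneg_iff.mp hSFnn).1,
      Complex.ext (by simp) (by simp [(Complex.nonneg_iff.mp hSFnn).2.symm])⟩
  obtain ⟨q, hq0, hqz⟩ : ∃ q : ℝ, 0 ≤ q ∧ SG = (q : ℂ) :=
    ⟨SG.re, (Complex.nonneg_iff.mp hSGnn).1,
      Complex.ext (by simp) (by simp [(Complex.nonneg_iff.mp hSGnn).2.symm])⟩
  rw [hpz, hqz, Complex.ofReal_re, Complex.ofReal_re, Complex.sq_norm]
  have hcross : ∑ n ∈ G, ∑ m ∈ F, conj (v n) * A n m * v m = conj z := by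
    rw [hz, Finset.sum_comm]
    simp only [map_sum, map_mul, Complex.conj_conj]
    refine Finset.sum_congr rfl fun n _ => Finset.sum_congr rfl fun m _ => ?_
    rw [← hherm n m]
    ring
  have hreal : ∀ t : ℝ, 0 ≤ p * (t * t) + (-2 * Complex.normSq z) * t
      + Complex.normSq z * q := by
    intro t
    set w : ℕ → ℂ := fun n => if n ∈ F then (t : ℂ) * v n
      else if n ∈ G then (-conj z) * v n else 0 with hw
    have hwF : ∀ n ∈ F, w n = (t : ℂ) * v n := fun n hn => by simp [hw, hn]
    have hwG : ∀ n ∈ G, w n = (-conj z) * v n := fun n hn => by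
      have : n ∉ F := Finset.disjoint_right.mp hFG hn
      simp [hw, hn, this]
    have hE := hpsd (F ∪ G) w
    rw [Finset.sum_union hFG] at hE
    simp only [Finset.sum_union hFG] at hE
    rw [Finset.sum_add_distrib, Finset.sum_add_distrib] at hE
    have eFF : ∑ n ∈ F, ∑ m ∈ F, conj (w n) * A n m * w m = (t:ℂ)^2 * SF := by
      rw [hSF, Finset.mul_sum]
      refine Finset.sum_congr rfl fun n hn => ?_
      rw [Finset.mul_sum]
      refine Finset.sum_congr rfl fun m hm => ?_
      rw [hwF n hn, hwF m hm, map_mul, Complex.conj_ofReal]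
      ring
    have eFG : ∑ n ∈ F, ∑ m ∈ G, conj (w n) * A n m * w m = (t:ℂ) * (-conj z) * z := by
      rw [hz, Finset.mul_sum]
      refine Finset.sum_congr rfl fun n hn => ?_
      rw [Finset.mul_sum]
      refine Finset.sum_congr rfl fun m hm => ?_
      rw [hwF n hn, hwG m hm, map_mul, Complex.conj_ofReal]
      ring
    have eGF : ∑ n ∈ G, ∑ m ∈ F, conj (w n) * A n m * w m = (-z) * (t:ℂ) * conj z := by
      rw [← hcross, Finset.mul_sum]
      refine Finset.sum_congr rfl fun n hn => ?_
      rw [Finset.mul_sum]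
      refine Finset.sum_congr rfl fun m hm => ?_
      rw [hwG n hn, hwF m hm, map_mul, map_neg, Complex.conj_conj]
      ring
    have eGG : ∑ n ∈ G, ∑ m ∈ G, conj (w n) * A n m * w m = z * conj z * SG := by
      rw [hSG, Finset.mul_sum]
      refine Finset.sum_congr rfl fun n hn => ?_
      rw [Finset.mul_sum]
      refine Finset.sum_congr rfl fun m hm => ?_
      rw [hwG n hn, hwG m hm, map_mul, map_neg, Complex.conj_conj]
      ring
    rw [eFF, eFG, eGF, eGG, hpz, hqz] at hE
    have hzz : z * conj z = ((Complex.normSq z : ℝ) : ℂ) := Complex.mul_conj z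
    have ecast : (t:ℂ)^2 * (p:ℂ) + (t:ℂ) * (-conj z) * z + ((-z) * (t:ℂ) * conj z
          + z * conj z * (q:ℂ))
        = ((p * (t * t) + (-2 * Complex.normSq z) * t + Complex.normSq z * q : ℝ) : ℂ) := by
      rw [show (t:ℂ) * (-conj z) * z = -((t:ℂ) * (z * conj z)) from by ring,
        show (-z) * (t:ℂ) * conj z = -((t:ℂ) * (z * conj z)) from by ring, hzz]
      push_cast
      ring
    rw [ecast] at hE
    exact_mod_cast (Complex.nonneg_iff.mp hE).1
  have hd := discrim_le_zero hreal
  rw [discrim] at hd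
  rcases eq_or_lt_of_le (Complex.normSq_nonneg z) with h0 | h0
  · rw [← h0]; exact mul_nonneg hp0 hq0
  · refine le_of_mul_le_mul_right ?_ h0
    nlinarith [hd]

lemma exp_norm_one (k : ℤ) (θ : ℝ) : ‖Complex.exp (Complex.I * k * θ)‖ = 1 := by
  rw [show Complex.I * (k:ℂ) * (θ:ℝ) = ((k * θ : ℝ) : ℂ) * Complex.I by push_cast; ring]
  exact Complex.norm_exp_ofReal_mul_I _

lemma integral_exp_Ico (k : ℤ) :
    (∫ θ in Set.Ico (0:ℝ) (2*Real.pi), Complex.exp (Complex.I * k * θ))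
      = if k = 0 then ((2*Real.pi : ℝ) : ℂ) else 0 := by
  have h2 : (0:ℝ) ≤ 2*Real.pi := by positivity
  rw [MeasureTheory.setIntegral_congr_set MeasureTheory.Ico_ae_eq_Ioc,
    ← intervalIntegral.integral_of_le h2]
  by_cases hk : k = 0
  · subst hk
    simp
  · have hc : Complex.I * (k:ℂ) ≠ 0 :=
      mul_ne_zero Complex.I_ne_zero (by exact_mod_cast hk)
    rw [if_neg hk]
    have heq : (fun θ : ℝ => Complex.exp (Complex.I * k * θ))
        = fun θ : ℝ => Complex.exp ((Complex.I * k) * θ) := by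
      funext θ; ring_nf
    rw [heq, integral_exp_mul_complex hc]
    have h1 : Complex.exp ((Complex.I * k) * ((2*Real.pi : ℝ) : ℂ)) = 1 := by
      rw [show (Complex.I * (k:ℂ)) * ((2*Real.pi : ℝ) : ℂ)
          = (k:ℂ) * (2 * (Real.pi:ℂ) * Complex.I) by push_cast; ring]
      exact_mod_cast Complex.exp_int_mul_two_pi_mul_I k
    rw [show ((Complex.I * (k:ℂ)) * ((0:ℝ):ℂ)) = 0 by push_cast; ring] at *
    rw [h1]
    simp

lemma integrableOn_exp_mul (k : ℤ) {X : Set ℝ} (hXsub : X ⊆ Set.Ico 0 (2*Real.pi)) :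
    IntegrableOn (fun θ : ℝ => Complex.exp (Complex.I * k * θ)) X := by
  have hc : Continuous fun θ : ℝ => Complex.exp (Complex.I * (k:ℂ) * (θ:ℝ)) :=
    Complex.continuous_exp.comp (continuous_const.mul Complex.continuous_ofReal)
  have hfin : volume X < ⊤ :=
    lt_of_le_of_lt (measure_mono hXsub)
      (by rw [Real.volume_Ico]; exact ENNReal.ofReal_lt_top)
  refine Measure.integrableOn_of_bounded (M := 1) hfin.ne hc.aestronglyMeasurable ?_
  filter_upwards with θ
  rw [exp_norm_one]

def Spoly (c T : ℕ × ℕ → ℂ) (F G : Finset ℕ) (θ : ℝ) : ℂ :=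
  ∑ n ∈ F, ∑ m ∈ G, T (m, n) * c (n, m) * Complex.exp (Complex.I * (((n:ℤ) - m : ℤ) : ℂ) * θ)

lemma Spoly_integrableOn (c T : ℕ × ℕ → ℂ) (F G : Finset ℕ) {X : Set ℝ}
    (hXsub : X ⊆ Set.Ico 0 (2*Real.pi)) :
    IntegrableOn (fun θ => Spoly c T F G θ) X := by
  apply MeasureTheory.integrable_finset_sum
  intro n _
  apply MeasureTheory.integrable_finset_sum
  intro m _
  exact (integrableOn_exp_mul _ hXsub).const_mul _

lemma setIntegral_Spoly (c T : ℕ × ℕ → ℂ) (F G : Finset ℕ) {X : Set ℝ}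
    (hXsub : X ⊆ Set.Ico 0 (2*Real.pi)) :
    ∫ θ in X, Spoly c T F G θ
      = ∑ n ∈ F, ∑ m ∈ G, T (m, n) * c (n, m)
          * ∫ θ in X, Complex.exp (Complex.I * (((n:ℤ) - m : ℤ) : ℂ) * θ) := by
  simp only [Spoly]
  rw [MeasureTheory.integral_finset_sum]
  · refine Finset.sum_congr rfl fun n _ => ?_
    rw [MeasureTheory.integral_finset_sum]
    · exact Finset.sum_congr rfl fun m _ => MeasureTheory.integral_const_mul _ _
    · exact fun m _ => (integrableOn_exp_mul _ hXsub).const_mul _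
  · intro n _
    apply MeasureTheory.integrable_finset_sum
    exact fun m _ => (integrableOn_exp_mul _ hXsub).const_mul _

lemma integral_Spoly_diag (c T : ℕ × ℕ → ℂ) (F : Finset ℕ) :
    ∫ θ in Set.Ico (0:ℝ) (2*Real.pi), Spoly c T F F θ
      = ((2*Real.pi : ℝ) : ℂ) * ∑ n ∈ F, T (n, n) * c (n, n) := by
  rw [setIntegral_Spoly c T F F (subset_refl _), Finset.mul_sum]
  refine Finset.sum_congr rfl fun n hn => ?_
  calc ∑ m ∈ F, T (m, n) * c (n, m)
          * ∫ θ in Set.Ico (0:ℝ) (2*Real.pi), Complex.exp (Complex.I * (((n:ℤ) - m : ℤ) : ℂ) * θ)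
      = ∑ m ∈ F, (if m = n then ((2*Real.pi : ℝ) : ℂ) * (T (n, n) * c (n, n)) else 0) := by
        refine Finset.sum_congr rfl fun m _ => ?_
        rw [integral_exp_Ico]
        by_cases hmn : m = n
        · subst hmn; simp; ring
        · rw [if_neg (by omega : ¬((n:ℤ) - m = 0)), if_neg hmn, mul_zero]
    _ = if n ∈ F then ((2*Real.pi : ℝ) : ℂ) * (T (n, n) * c (n, n)) else 0 :=
        Finset.sum_ite_eq' F n _
    _ = ((2*Real.pi : ℝ) : ℂ) * (T (n, n) * c (n, n)) := if_pos hn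

lemma form_cross {A : ℕ → ℕ → ℂ} (hherm : ∀ n m, A m n = conj (A n m))
    (F G : Finset ℕ) (v : ℕ → ℂ) :
    ∑ n ∈ G, ∑ m ∈ F, conj (v n) * A n m * v m
      = conj (∑ n ∈ F, ∑ m ∈ G, conj (v n) * A n m * v m) := by
  rw [Finset.sum_comm]
  simp only [map_sum, map_mul, Complex.conj_conj]
  refine Finset.sum_congr rfl fun n _ => Finset.sum_congr rfl fun m _ => ?_
  rw [← hherm n m]
  ring

lemma Spoly_eq_form (c T : ℕ × ℕ → ℂ) (F G : Finset ℕ) (θ : ℝ) :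
    Spoly c T F G θ = ∑ n ∈ F, ∑ m ∈ G,
      conj (Complex.exp (-(Complex.I * n * θ))) * (T (m, n) * c (n, m))
        * Complex.exp (-(Complex.I * m * θ)) := by
  refine Finset.sum_congr rfl fun n _ => Finset.sum_congr rfl fun m _ => ?_
  have hconj : conj (Complex.exp (-(Complex.I * (n:ℕ) * θ)))
      = Complex.exp (Complex.I * n * θ) := by
    rw [← Complex.exp_conj]
    congr 1
    simp [Complex.conj_ofReal]
  have he : Complex.exp (Complex.I * (((n:ℤ) - m : ℤ) : ℂ) * θ)
      = Complex.exp (Complex.I * n * θ) * Complex.exp (-(Complex.I * m * θ)) := by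
    rw [← Complex.exp_add]
    congr 1
    push_cast
    ring
  rw [hconj, he]
  ring

lemma A_herm {c T : ℕ × ℕ → ℂ} (hT : IsPosSemidef T) (hc : IsPosSemidef c) (n m : ℕ) :
    T (n, m) * c (m, n) = conj (T (m, n) * c (n, m)) := by
  rw [map_mul, ← herm hT m n, ← herm hc n m]

lemma Spoly_nonneg {c T : ℕ × ℕ → ℂ} (hT : IsPosSemidef T) (hc : IsPosSemidef c)
    (F : Finset ℕ) (θ : ℝ) : 0 ≤ Spoly c T F F θ := by
  rw [Spoly_eq_form]
  exact had_nonneg hT hc F _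

lemma Spoly_conj {c T : ℕ × ℕ → ℂ} (hT : IsPosSemidef T) (hc : IsPosSemidef c)
    (F G : Finset ℕ) (θ : ℝ) : Spoly c T G F θ = conj (Spoly c T F G θ) := by
  rw [Spoly_eq_form, Spoly_eq_form]
  exact form_cross (fun n m => A_herm hT hc n m) F G _

lemma Spoly_cs {c T : ℕ × ℕ → ℂ} (hT : IsPosSemidef T) (hc : IsPosSemidef c)
    (F G : Finset ℕ) (hFG : Disjoint F G) (θ : ℝ) :
    ‖Spoly c T F G θ‖ ^ 2 ≤ (Spoly c T F F θ).re * (Spoly c T G G θ).re := by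
  rw [Spoly_eq_form, Spoly_eq_form, Spoly_eq_form]
  exact cs_key (had_nonneg hT hc) (fun n m => A_herm hT hc n m) F G hFG _

lemma Spoly_split (c T : ℕ × ℕ → ℂ) (F G : Finset ℕ) (hFG : Disjoint F G) (θ : ℝ) :
    Spoly c T (F ∪ G) (F ∪ G) θ
      = Spoly c T F F θ + Spoly c T F G θ + (Spoly c T G F θ + Spoly c T G G θ) := by
  rw [Spoly, Spoly, Spoly, Spoly, Spoly]
  rw [Finset.sum_union hFG]
  simp only [Finset.sum_union hFG]
  rw [Finset.sum_add_distrib, Finset.sum_add_distrib]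

lemma Spoly_pointwise {c T : ℕ × ℕ → ℂ} (hT : IsPosSemidef T) (hc : IsPosSemidef c)
    (F G : Finset ℕ) (hFG : Disjoint F G) {ε : ℝ} (hε : 0 < ε) (θ : ℝ) :
    ‖Spoly c T (F ∪ G) (F ∪ G) θ - Spoly c T F F θ‖
      ≤ ε * (Spoly c T F F θ).re + (1 + ε⁻¹) * (Spoly c T G G θ).re := by
  have hsplit := Spoly_split c T F G hFG θ
  have hd : Spoly c T (F ∪ G) (F ∪ G) θ - Spoly c T F F θ
      = Spoly c T F G θ + Spoly c T G F θ + Spoly c T G G θ := by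
    rw [hsplit]; ring
  set RF := (Spoly c T F F θ).re with hRF
  set RG := (Spoly c T G G θ).re with hRG
  have hRFnn : 0 ≤ RF := (Complex.nonneg_iff.mp (Spoly_nonneg hT hc F θ)).1
  have hRGnn : 0 ≤ RG := (Complex.nonneg_iff.mp (Spoly_nonneg hT hc G θ)).1
  have hGGnorm : ‖Spoly c T G G θ‖ = RG := by
    have him := (Complex.nonneg_iff.mp (Spoly_nonneg hT hc G θ)).2
    rw [Complex.norm_def, Complex.normSq_apply, ← him]
    simp [Real.sqrt_mul_self hRGnn]
    exact Real.sqrt_mul_self hRGnn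
  have hGF : ‖Spoly c T G F θ‖ = ‖Spoly c T F G θ‖ := by
    rw [Spoly_conj hT hc F G θ, RCLike.norm_conj]
  set u := ‖Spoly c T F G θ‖ with hu
  have hunn : 0 ≤ u := norm_nonneg _
  have hcs : u ^ 2 ≤ RF * RG := by
    rw [hu]
    exact Spoly_cs hT hc F G hFG θ
  have h2u : 2 * u ≤ ε * RF + ε⁻¹ * RG := by
    have hA : 0 ≤ ε * RF + ε⁻¹ * RG := by positivity
    have hsq : (2 * u) ^ 2 ≤ (ε * RF + ε⁻¹ * RG) ^ 2 := by
      have hid : (ε * RF + ε⁻¹ * RG) ^ 2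
          = (ε * RF - ε⁻¹ * RG) ^ 2 + 4 * (ε * ε⁻¹) * (RF * RG) := by ring
      rw [hid, mul_inv_cancel₀ hε.ne']
      nlinarith [sq_nonneg (ε * RF - ε⁻¹ * RG), hcs]
    nlinarith [hsq, hA, hunn]
  calc ‖Spoly c T (F ∪ G) (F ∪ G) θ - Spoly c T F F θ‖
      ≤ ‖Spoly c T F G θ‖ + ‖Spoly c T G F θ‖ + ‖Spoly c T G G θ‖ := by
        rw [hd]; exact norm_add₃_le
    _ = 2 * u + RG := by rw [hGF, hGGnorm, ← hu]; ring
    _ ≤ (ε * RF + ε⁻¹ * RG) + RG := by linarith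
    _ = ε * RF + (1 + ε⁻¹) * RG := by ring

lemma Spoly_L1_bound {c T : ℕ × ℕ → ℂ} (hT : IsPosSemidef T) (hc : IsPosSemidef c)
    (F G : Finset ℕ) (hFG : Disjoint F G) {ε : ℝ} (hε : 0 < ε) :
    ∫ θ in Set.Ico (0:ℝ) (2*Real.pi), ‖Spoly c T (F ∪ G) (F ∪ G) θ - Spoly c T F F θ‖
      ≤ ε * (2*Real.pi * (∑ n ∈ F, (T (n, n) * c (n, n)).re))
        + (1 + ε⁻¹) * (2*Real.pi * (∑ n ∈ G, (T (n, n) * c (n, n)).re)) := by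
  have hIF := Spoly_integrableOn c T F F (subset_refl (Set.Ico (0:ℝ) (2*Real.pi)))
  have hIG := Spoly_integrableOn c T G G (subset_refl (Set.Ico (0:ℝ) (2*Real.pi)))
  have hIU := Spoly_integrableOn c T (F ∪ G) (F ∪ G) (subset_refl (Set.Ico (0:ℝ) (2*Real.pi)))
  have hIFre : Integrable (fun θ => (Spoly c T F F θ).re)
      (volume.restrict (Set.Ico (0:ℝ) (2*Real.pi))) := by
    have := hIF.re
    simpa using this
  have hIGre : Integrable (fun θ => (Spoly c T G G θ).re)
      (volume.restrict (Set.Ico (0:ℝ) (2*Real.pi))) := by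
    have := hIG.re
    simpa using this
  have hmono : ∫ θ in Set.Ico (0:ℝ) (2*Real.pi), ‖Spoly c T (F ∪ G) (F ∪ G) θ - Spoly c T F F θ‖
      ≤ ∫ θ in Set.Ico (0:ℝ) (2*Real.pi),
          (ε * (Spoly c T F F θ).re + (1 + ε⁻¹) * (Spoly c T G G θ).re) := by
    refine MeasureTheory.integral_mono ((hIU.sub hIF).norm) ?_
      (fun θ => Spoly_pointwise hT hc F G hFG hε θ)
    exact (hIFre.const_mul ε).add (hIGre.const_mul (1 + ε⁻¹))
  have hre : ∀ (H : Finset ℕ), ∫ θ in Set.Ico (0:ℝ) (2*Real.pi), (Spoly c T H H θ).re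
      = 2*Real.pi * (∑ n ∈ H, (T (n, n) * c (n, n)).re) := by
    intro H
    have h1 : ∫ θ in Set.Ico (0:ℝ) (2*Real.pi), (Spoly c T H H θ).re
        = (∫ θ in Set.Ico (0:ℝ) (2*Real.pi), Spoly c T H H θ).re := by
      have := integral_re (Spoly_integrableOn c T H H (subset_refl _))
      simpa using this
    rw [h1, integral_Spoly_diag, Complex.re_ofReal_mul, Complex.re_sum]
  calc ∫ θ in Set.Ico (0:ℝ) (2*Real.pi), ‖Spoly c T (F ∪ G) (F ∪ G) θ - Spoly c T F F θ‖
      ≤ ∫ θ in Set.Ico (0:ℝ) (2*Real.pi),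
          (ε * (Spoly c T F F θ).re + (1 + ε⁻¹) * (Spoly c T G G θ).re) := hmono
    _ = ε * (2*Real.pi * (∑ n ∈ F, (T (n, n) * c (n, n)).re))
        + (1 + ε⁻¹) * (2*Real.pi * (∑ n ∈ G, (T (n, n) * c (n, n)).re)) := by
        rw [MeasureTheory.integral_add (hIFre.const_mul ε) (hIGre.const_mul (1 + ε⁻¹)),
          MeasureTheory.integral_const_mul, MeasureTheory.integral_const_mul, hre F, hre G]

lemma l1_from_sets {f : ℝ → ℂ} (hm : StronglyMeasurable f)
    (hf : IntegrableOn f (Set.Ico (0:ℝ) (2*Real.pi)) volume) {B : ℝ}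
    (hB : ∀ X : Set ℝ, MeasurableSet X → X ⊆ Set.Ico 0 (2*Real.pi) → ‖∫ θ in X, f θ‖ ≤ B) :
    ∫ θ in Set.Ico (0:ℝ) (2*Real.pi), ‖f θ‖ ≤ 4 * B := by
  set I := Set.Ico (0:ℝ) (2*Real.pi) with hI
  have hImeas : MeasurableSet I := measurableSet_Ico
  have hmf : Measurable f := hm.measurable
  have key : ∀ g : ℝ → ℝ, Measurable g → IntegrableOn g I volume →
      (∀ X : Set ℝ, MeasurableSet X → X ⊆ I → |∫ θ in X, g θ| ≤ B) →
      ∫ θ in I, |g θ| ≤ 2 * B := by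
    intro g hgm hgi hgB
    set P := {θ : ℝ | 0 ≤ g θ} with hP
    have hPmeas : MeasurableSet P := measurableSet_le measurable_const hgm
    have hsplit : (∫ θ in I ∩ P, |g θ|) + (∫ θ in I \ P, |g θ|) = ∫ θ in I, |g θ| :=
      MeasureTheory.integral_inter_add_diff hPmeas hgi.abs
    have h1 : ∫ θ in I ∩ P, |g θ| = ∫ θ in I ∩ P, g θ :=
      MeasureTheory.setIntegral_congr_fun (hImeas.inter hPmeas)
        (fun θ hθ => abs_of_nonneg hθ.2)
    have h2 : ∫ θ in I \ P, |g θ| = - ∫ θ in I \ P, g θ := by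
      rw [← MeasureTheory.integral_neg]
      exact MeasureTheory.setIntegral_congr_fun (hImeas.diff hPmeas)
        (fun θ hθ => abs_of_neg (lt_of_not_ge hθ.2))
    have b1 := hgB (I ∩ P) (hImeas.inter hPmeas) Set.inter_subset_left
    have b2 := hgB (I \ P) (hImeas.diff hPmeas) Set.diff_subset
    rw [← hsplit, h1, h2]
    linarith [(abs_le.mp b1).2, (abs_le.mp b2).1]
  have hre_int : IntegrableOn (fun θ => (f θ).re) I volume := by have := hf.re; simpa [IntegrableOn] using this
  have him_int : IntegrableOn (fun θ => (f θ).im) I volume := by have := hf.im; simpa [IntegrableOn] using this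
  have hreB : ∀ X : Set ℝ, MeasurableSet X → X ⊆ I → |∫ θ in X, (f θ).re| ≤ B := by
    intro X hX hXs
    have hint : IntegrableOn f X volume := hf.mono_set hXs
    have he : ∫ θ in X, (f θ).re = (∫ θ in X, f θ).re := by
      have := integral_re hint; simpa using this
    rw [he]
    calc |(∫ θ in X, f θ).re| ≤ ‖∫ θ in X, f θ‖ := Complex.abs_re_le_norm _
      _ = ‖∫ θ in X, f θ‖ := rfl
      _ ≤ B := hB X hX hXs
  have himB : ∀ X : Set ℝ, MeasurableSet X → X ⊆ I → |∫ θ in X, (f θ).im| ≤ B := by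
    intro X hX hXs
    have hint : IntegrableOn f X volume := hf.mono_set hXs
    have he : ∫ θ in X, (f θ).im = (∫ θ in X, f θ).im := by
      have := integral_im hint; simpa using this
    rw [he]
    calc |(∫ θ in X, f θ).im| ≤ ‖∫ θ in X, f θ‖ := Complex.abs_im_le_norm _
      _ = ‖∫ θ in X, f θ‖ := rfl
      _ ≤ B := hB X hX hXs
  have habs : ∀ θ, ‖f θ‖ ≤ |(f θ).re| + |(f θ).im| := fun θ => by
    exact Complex.norm_le_abs_re_add_abs_im _
  calc ∫ θ in I, ‖f θ‖ ≤ ∫ θ in I, (|(f θ).re| + |(f θ).im|) :=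
      MeasureTheory.integral_mono hf.norm (hre_int.abs.add him_int.abs) habs
    _ = (∫ θ in I, |(f θ).re|) + ∫ θ in I, |(f θ).im| :=
      MeasureTheory.integral_add hre_int.abs him_int.abs
    _ ≤ 2*B + 2*B := add_le_add
        (key _ (Complex.measurable_re.comp hmf) hre_int hreB)
        (key _ (Complex.measurable_im.comp hmf) him_int himB)
    _ = 4*B := by ring

lemma Spoly_continuous (c T : ℕ × ℕ → ℂ) (F G : Finset ℕ) :
    Continuous (fun θ => Spoly c T F G θ) := by
  apply continuous_finset_sum
  intro n _
  apply continuous_finset_sum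
  intro m _
  exact continuous_const.mul
    (Complex.continuous_exp.comp (continuous_const.mul Complex.continuous_ofReal))

theorem stmt14 (c T : ℕ × ℕ → ℂ) (hc : IsPhaseMatrix c) (hT : IsStateMatrix T)
    (g : ℝ → ℂ) (hg1 : Integrable g mu)
    (hg : ∀ X : Set ℝ, MeasurableSet X → X ⊆ Set.Ico 0 (2 * Real.pi) →
      Tendsto
        (fun st : ℕ × ℕ => ∑ n ∈ Finset.range (st.1 + 1), ∑ m ∈ Finset.range (st.2 + 1),
          T (m, n) * c (n, m) * ik ((n : ℤ) - m) X)
        atTop (nhds ((2 * Real.pi)⁻¹ * ∫ θ in X, g θ))) :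
    ∃ s : ℕ → ℕ, StrictMono s ∧
      ∀ᵐ θ ∂(volume.restrict (Set.Ico 0 (2 * Real.pi))),
        Tendsto (fun k => hpart c T (s k) (s k) θ) atTop (nhds (g θ)) := by
  obtain ⟨hc1, hcps⟩ := hc
  obtain ⟨hTps, hTsum⟩ := hT
  have hpi : (0:ℝ) < Real.pi := Real.pi_pos
  set I := Set.Ico (0:ℝ) (2 * Real.pi) with hIdef
  have hImeas : MeasurableSet I := measurableSet_Ico
  -- diagonal sums
  set sig : ℕ → ℝ := fun s => ∑ n ∈ Finset.range (s + 1), (T (n, n)).re with hsig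
  have ha_nn : ∀ n, 0 ≤ (T (n, n)).re := fun n =>
    (Complex.nonneg_iff.mp (diag_nonneg hTps n)).1
  have haSum : HasSum (fun n => (T (n, n)).re) 1 := by
    have := hTsum.mapL Complex.reCLM
    simpa using this
  have hsig_le1 : ∀ s, sig s ≤ 1 :=
    fun s => sum_le_hasSum _ (fun n _ => ha_nn n) haSum
  have hsig_nn : ∀ s, 0 ≤ sig s :=
    fun s => Finset.sum_nonneg (fun n _ => ha_nn n)
  have hsig_tend : Tendsto sig atTop (nhds 1) :=
    haSum.tendsto_sum_nat.comp (tendsto_add_atTop_nat 1)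
  -- splitting of ranges
  have hunion : ∀ s t : ℕ, s ≤ t →
      Finset.range (t + 1) = Finset.range (s + 1) ∪ Finset.Ioc s t := by
    intro s t hst
    ext x
    simp only [Finset.mem_range, Finset.mem_union, Finset.mem_Ioc]
    omega
  have hdisj : ∀ s t : ℕ, Disjoint (Finset.range (s + 1)) (Finset.Ioc s t) := by
    intro s t
    rw [Finset.disjoint_left]
    intro x hx hx'
    simp only [Finset.mem_range] at hx
    simp only [Finset.mem_Ioc] at hx'
    omega
  have hTc : ∀ (H : Finset ℕ), ∑ n ∈ H, (T (n, n) * c (n, n)).re = ∑ n ∈ H, (T (n, n)).re :=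
    fun H => Finset.sum_congr rfl fun n _ => by rw [hc1 n, mul_one]
  have hIoc_sum : ∀ s t : ℕ, s ≤ t →
      ∑ n ∈ Finset.Ioc s t, (T (n, n)).re = sig t - sig s := by
    intro s t hst
    have := hunion s t hst
    have h2 : sig t = sig s + ∑ n ∈ Finset.Ioc s t, (T (n, n)).re := by
      rw [hsig]
      simp only
      rw [this, Finset.sum_union (hdisj s t)]
    linarith
  -- L1 Cauchy bound
  have hCauchy : ∀ (s t : ℕ), s ≤ t → ∀ {ε : ℝ}, 0 < ε →
      ∫ θ in I, ‖Spoly c T (Finset.range (t+1)) (Finset.range (t+1)) θ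
          - Spoly c T (Finset.range (s+1)) (Finset.range (s+1)) θ‖
        ≤ ε * (2*Real.pi) + (1 + ε⁻¹) * (2*Real.pi) * (1 - sig s) := by
    intro s t hst ε hε
    have hb := Spoly_L1_bound hTps hcps (Finset.range (s+1)) (Finset.Ioc s t) (hdisj s t) hε
    rw [← hunion s t hst, hTc, hTc, hIoc_sum s t hst] at hb
    refine hb.trans ?_
    have e1 : ε * (2*Real.pi * sig s) ≤ ε * (2*Real.pi) := by
      have : 2*Real.pi * sig s ≤ 2*Real.pi * 1 := by
        apply mul_le_mul_of_nonneg_left (hsig_le1 s) (by positivity)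
      nlinarith
    have e2 : (1 + ε⁻¹) * (2*Real.pi * (sig t - sig s))
        ≤ (1 + ε⁻¹) * (2*Real.pi) * (1 - sig s) := by
      have h1 : 0 ≤ 1 + ε⁻¹ := by positivity
      have h2 : 2*Real.pi * (sig t - sig s) ≤ 2*Real.pi * (1 - sig s) := by
        apply mul_le_mul_of_nonneg_left (by linarith [hsig_le1 t]) (by positivity)
      nlinarith
    linarith
  -- integrability of g
  have hmuI : mu = (ENNReal.ofReal (2 * Real.pi)⁻¹) • (volume.restrict I) := rfl
  have hc0 : (ENNReal.ofReal (2 * Real.pi)⁻¹) ≠ 0 :=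
    ne_of_gt (ENNReal.ofReal_pos.mpr (by positivity))
  have hgI : IntegrableOn g I volume := by
    rw [hmuI] at hg1
    exact (integrable_smul_measure hc0 ENNReal.ofReal_ne_top).mp hg1
  set g' : ℝ → ℂ := AEStronglyMeasurable.mk g hgI.aestronglyMeasurable with hg'def
  have hg'meas : StronglyMeasurable g' := hgI.aestronglyMeasurable.stronglyMeasurable_mk
  have hgg' : g =ᵐ[volume.restrict I] g' := hgI.aestronglyMeasurable.ae_eq_mk
  have hg'I : IntegrableOn g' I volume := hgI.congr hgg'
  have hXg : ∀ (X : Set ℝ), MeasurableSet X → X ⊆ I →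
      ∫ θ in X, g' θ = ∫ θ in X, g θ := by
    intro X hXm hXs
    refine MeasureTheory.integral_congr_ae
      (Filter.EventuallyEq.symm ?_)
    exact MeasureTheory.ae_restrict_of_ae_restrict_of_subset hXs hgg' 
  -- limit of set integrals
  have hpi2 : (2 * (Real.pi:ℂ)) ≠ 0 := by
    simp only [ne_eq, mul_eq_zero, not_or]
    constructor
    · norm_num
    · exact_mod_cast hpi.ne'
  have hXtend : ∀ (X : Set ℝ), MeasurableSet X → X ⊆ I →
      Tendsto (fun t : ℕ => ∫ θ in X, hpart c T t t θ) atTop (nhds (∫ θ in X, g θ)) := by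
    intro X hXm hXs
    have hint_eq : ∀ s t : ℕ, ∫ θ in X, hpart c T s t θ
        = (2 * (Real.pi:ℂ)) * ∑ n ∈ Finset.range (s+1), ∑ m ∈ Finset.range (t+1),
            T (m, n) * c (n, m) * ik ((n:ℤ) - m) X := by
      intro s t
      have h0 : ∫ θ in X, hpart c T s t θ
          = ∫ θ in X, Spoly c T (Finset.range (s+1)) (Finset.range (t+1)) θ := rfl
      rw [h0, setIntegral_Spoly c T _ _ hXs, Finset.mul_sum]
      refine Finset.sum_congr rfl fun n _ => ?_
      rw [Finset.mul_sum]
      refine Finset.sum_congr rfl fun m _ => ?_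
      rw [ik]
      field_simp
      push_cast; field_simp
    have hdd : Tendsto (fun t : ℕ => ((t, t) : ℕ × ℕ)) atTop atTop := by
      rw [← Filter.prod_atTop_atTop_eq]
      exact Filter.Tendsto.prodMk tendsto_id tendsto_id
    have h1 := ((hg X hXm hXs).comp hdd).const_mul (2 * (Real.pi:ℂ))
    have h2 : (2 * (Real.pi:ℂ)) * ((((2 * Real.pi)⁻¹ : ℝ) : ℂ) * ∫ θ in X, g θ)
        = ∫ θ in X, g θ := by
      rw [← mul_assoc,
        show (2 * (Real.pi:ℂ)) * (((2 * Real.pi)⁻¹ : ℝ) : ℂ) = 1 by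
          push_cast; exact mul_inv_cancel₀ hpi2,
        one_mul]
    rw [h2] at h1
    refine h1.congr fun t => ?_
    exact (hint_eq t t).symm
  -- distance of set integrals to g
  have hBnd : ∀ (X : Set ℝ), MeasurableSet X → X ⊆ I → ∀ (s : ℕ), ∀ {ε : ℝ}, 0 < ε →
      ‖(∫ θ in X, (Spoly c T (Finset.range (s+1)) (Finset.range (s+1)) θ - g' θ))‖
        ≤ ε * (2*Real.pi) + (1 + ε⁻¹) * (2*Real.pi) * (1 - sig s) := by
    intro X hXm hXs s ε hε
    have hSint : ∀ u : ℕ, IntegrableOn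
        (fun θ => Spoly c T (Finset.range (u+1)) (Finset.range (u+1)) θ) X volume :=
      fun u => Spoly_integrableOn c T _ _ hXs
    have hg'X : IntegrableOn g' X volume := hg'I.mono_set hXs
    rw [MeasureTheory.integral_sub (hSint s) hg'X, hXg X hXm hXs]
    have hlim : Tendsto (fun t : ℕ =>
        ‖(∫ θ in X, Spoly c T (Finset.range (t+1)) (Finset.range (t+1)) θ)
          - ∫ θ in X, Spoly c T (Finset.range (s+1)) (Finset.range (s+1)) θ‖) atTop
        (nhds ‖(∫ θ in X, g θ)
          - ∫ θ in X, Spoly c T (Finset.range (s+1)) (Finset.range (s+1)) θ‖) :=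
      ((hXtend X hXm hXs).sub tendsto_const_nhds).norm
    have hev : ∀ᶠ t : ℕ in atTop,
        ‖(∫ θ in X, Spoly c T (Finset.range (t+1)) (Finset.range (t+1)) θ)
          - ∫ θ in X, Spoly c T (Finset.range (s+1)) (Finset.range (s+1)) θ‖
        ≤ ε * (2*Real.pi) + (1 + ε⁻¹) * (2*Real.pi) * (1 - sig s) := by
      filter_upwards [eventually_ge_atTop s] with t hts
      rw [← MeasureTheory.integral_sub (hSint t) (hSint s)]
      calc ‖∫ θ in X, (Spoly c T (Finset.range (t+1)) (Finset.range (t+1)) θ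
              - Spoly c T (Finset.range (s+1)) (Finset.range (s+1)) θ)‖
          ≤ ∫ θ in X, ‖Spoly c T (Finset.range (t+1)) (Finset.range (t+1)) θ
              - Spoly c T (Finset.range (s+1)) (Finset.range (s+1)) θ‖ :=
            MeasureTheory.norm_integral_le_integral_norm _
        _ ≤ ∫ θ in I, ‖Spoly c T (Finset.range (t+1)) (Finset.range (t+1)) θ
              - Spoly c T (Finset.range (s+1)) (Finset.range (s+1)) θ‖ := by
            refine MeasureTheory.setIntegral_mono_set
              (((Spoly_integrableOn c T _ _ (subset_refl I)).sub
                (Spoly_integrableOn c T _ _ (subset_refl I))).norm)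
              (Filter.Eventually.of_forall fun θ => norm_nonneg _)
              (HasSubset.Subset.eventuallyLE hXs)
        _ ≤ ε * (2*Real.pi) + (1 + ε⁻¹) * (2*Real.pi) * (1 - sig s) := hCauchy s t hts hε
    have := le_of_tendsto hlim hev
    rwa [norm_sub_rev] at this
  -- L1 distance to g
  set D : ℕ → ℝ := fun s => ∫ θ in I,
      ‖Spoly c T (Finset.range (s+1)) (Finset.range (s+1)) θ - g' θ‖ with hD
  have hDbound : ∀ (s : ℕ) {ε : ℝ}, 0 < ε →
      D s ≤ 4 * (ε * (2*Real.pi) + (1 + ε⁻¹) * (2*Real.pi) * (1 - sig s)) := by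
    intro s ε hε
    refine l1_from_sets ?_ ?_ ?_
    · exact ((Spoly_continuous c T _ _).stronglyMeasurable).sub hg'meas
    · exact (Spoly_integrableOn c T _ _ (subset_refl I)).sub hg'I
    · exact fun X hXm hXs => hBnd X hXm hXs s hε
  have hDnn : ∀ s, 0 ≤ D s :=
    fun s => MeasureTheory.integral_nonneg fun θ => norm_nonneg _
  have hDtend : Tendsto D atTop (nhds 0) := by
    rw [Metric.tendsto_atTop]
    intro δ hδ
    set ε : ℝ := δ / (32 * Real.pi) with hεdef
    have hε : 0 < ε := by positivity
    set C : ℝ := 4 * (1 + ε⁻¹) * (2*Real.pi) with hCdef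
    have hC : 0 < C := by positivity
    have h1 : Tendsto (fun s => 1 - sig s) atTop (nhds 0) := by
      have := tendsto_const_nhds (x := (1:ℝ)) (f := atTop (α := ℕ))
      simpa using this.sub hsig_tend
    have hev : ∀ᶠ s : ℕ in atTop, 1 - sig s < δ / (2 * C) :=
      h1.eventually_lt_const (by positivity)
    obtain ⟨N, hN⟩ := Filter.eventually_atTop.mp hev
    refine ⟨N, fun s hs => ?_⟩
    have hds := hDbound s hε
    have hsmall : 1 - sig s < δ / (2 * C) := hN s hs
    have h4 : 4 * (ε * (2*Real.pi)) = δ / 4 := by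
      rw [hεdef]
      field_simp
      ring
    have h5 : 4 * ((1 + ε⁻¹) * (2*Real.pi) * (1 - sig s)) = C * (1 - sig s) := by
      rw [hCdef]; ring
    have h6 : C * (1 - sig s) < C * (δ / (2 * C)) :=
      mul_lt_mul_of_pos_left hsmall hC
    have h7 : C * (δ / (2 * C)) = δ / 2 := by
      field_simp
    rw [Real.dist_eq, sub_zero, abs_of_nonneg (hDnn s)]
    calc D s ≤ 4 * (ε * (2*Real.pi) + (1 + ε⁻¹) * (2*Real.pi) * (1 - sig s)) := hds
      _ = 4 * (ε * (2*Real.pi)) + 4 * ((1 + ε⁻¹) * (2*Real.pi) * (1 - sig s)) := by ring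
      _ < δ / 4 + δ / 2 := by rw [h4]; rw [h5]; linarith
      _ < δ := by linarith
  -- convergence in L1 / in measure
  set hps : ℕ → ℝ → ℂ :=
    fun s θ => Spoly c T (Finset.range (s+1)) (Finset.range (s+1)) θ with hpsdef
  have hsnorm : ∀ s : ℕ, eLpNorm (hps s - g') 1 (volume.restrict I) = ENNReal.ofReal (D s) := by
    intro s
    have hint : Integrable (hps s - g') (volume.restrict I) :=
      (Spoly_integrableOn c T _ _ (subset_refl I)).sub hg'I
    rw [MeasureTheory.eLpNorm_one_eq_lintegral_enorm,
      ← MeasureTheory.ofReal_integral_norm_eq_lintegral_enorm hint]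
    rfl
  have help : Tendsto (fun s => eLpNorm (hps s - g') 1 (volume.restrict I)) atTop (nhds 0) := by
    have h0 := ENNReal.tendsto_ofReal hDtend
    rw [ENNReal.ofReal_zero] at h0
    refine Tendsto.congr (fun s => (hsnorm s).symm) h0
  have hTIM : TendstoInMeasure (volume.restrict I) hps atTop g' := by
    refine MeasureTheory.tendstoInMeasure_of_tendsto_eLpNorm one_ne_zero
      (fun s => ((Spoly_continuous c T _ _).stronglyMeasurable).aestronglyMeasurable)
      hg'meas.aestronglyMeasurable help
  obtain ⟨ns, hns_mono, hns_ae⟩ := hTIM.exists_seq_tendsto_ae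
  refine ⟨ns, hns_mono, ?_⟩
  filter_upwards [hns_ae, hgg'] with θ h1 h2
  rw [h2]
  exact h1
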